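/- arXiv:1810.00201 — 5 statements merged into one kernel-verified Lean document; each statement's English description precedes it below -/
import Mathlib

section
/- For integers d, m with 2 ≤ d < m ≤ 2d-1, and the contractions S_j(x) = x/d + (j/d)·(d-1)/(m-1) for j = 0,...,m-1, one has S_i ∘ S_{j+d} = S_{i+1} ∘ S_j for all 0 ≤ j ≤ m-d-1 and 0 ≤ i ≤ m-2, and moreover S_i ∘ S_k = S_ℓ ∘ S_j with (i,k) ≠ (ℓ,j) implies {(i,k),(ℓ,j)} = {(i,j+d),(i+1,j)} for some 0 ≤ j ≤ m-d-1. -/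
noncomputable def Smap (m d : ℕ) (j : ℕ) (x : ℝ) : ℝ :=
  x / d + (j : ℝ) / d * (((d : ℝ) - 1) / ((m : ℝ) - 1))

/-! Writing `c = (d - 1) / (m - 1)`, the composition `S_i ∘ S_k` is `x ↦ x / d² + (k + i d) c / d²`,
so, as `c ≠ 0`, two compositions agree exactly when `k + i d = j + l d`. Since the digits `k, j` lie
below `m < 2d`, such a coincidence forces `l = i ± 1` and `k = j ± d`. -/

theorem Smap_comp_Smap_apply {m d : ℕ} (hd : d ≠ 0) (i k : ℕ) (x : ℝ) :
    (Smap m d i ∘ Smap m d k) x =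
      x / d ^ 2 + ((k + i * d : ℕ) : ℝ) / d ^ 2 * (((d : ℝ) - 1) / ((m : ℝ) - 1)) := by
  simp only [Smap, Function.comp_apply]
  push_cast
  field_simp
  ring

theorem Smap_comp_Smap_eq_iff {m d : ℕ} (hd : 2 ≤ d) (hm : 1 < m) (i k l j : ℕ) :
    Smap m d i ∘ Smap m d k = Smap m d l ∘ Smap m d j ↔ k + i * d = j + l * d := by
  have hd0 : d ≠ 0 := by omega
  have hc : ((d : ℝ) - 1) / ((m : ℝ) - 1) ≠ 0 := by
    have hd1 : (1 : ℝ) < d := by exact_mod_cast hd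
    have hm1 : (1 : ℝ) < m := by exact_mod_cast hm
    exact div_ne_zero (by linarith) (by linarith)
  constructor
  · intro h
    have h0 := congrFun h 0
    rw [Smap_comp_Smap_apply hd0, Smap_comp_Smap_apply hd0] at h0
    have hd2 : ((d : ℝ) ^ 2) ≠ 0 := by positivity
    exact_mod_cast (div_left_inj' hd2).1 (mul_right_cancel₀ hc (add_left_cancel h0))
  · intro h
    funext x
    rw [Smap_comp_Smap_apply hd0, Smap_comp_Smap_apply hd0, h]

theorem add_mul_eq_add_mul_of_lt_two_mul {d i k l j : ℕ} (hk : k < 2 * d) (hj : j < 2 * d)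
    (h : k + i * d = j + l * d) (hne : (i, k) ≠ (l, j)) :
    (k = j + d ∧ l = i + 1) ∨ (j = k + d ∧ i = l + 1) := by
  wlog hil : i ≤ l generalizing i k l j
  · exact (this hj hk h.symm hne.symm (by omega)).symm
  obtain ⟨t, rfl⟩ := Nat.exists_eq_add_of_le hil
  have hkt : k = j + t * d := by linarith
  rcases t with _ | _ | t
  · exact absurd (by simp [hkt]) hne
  · left; simp [hkt]
  · nlinarith

theorem stmt_0 (m d : ℕ) (hd : 2 ≤ d) (hdm : d < m) (hm : m ≤ 2 * d - 1) :
    (∀ i j : ℕ, i ≤ m - 2 → j ≤ m - d - 1 →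
      Smap m d i ∘ Smap m d (j + d) = Smap m d (i + 1) ∘ Smap m d j) ∧
    (∀ i k l j : ℕ, i < m → k < m → l < m → j < m →
      Smap m d i ∘ Smap m d k = Smap m d l ∘ Smap m d j → (i, k) ≠ (l, j) →
      ∃ i' j' : ℕ, j' ≤ m - d - 1 ∧
        (((i, k) = (i', j' + d) ∧ (l, j) = (i' + 1, j')) ∨
         ((l, j) = (i', j' + d) ∧ (i, k) = (i' + 1, j')))) := by
  refine ⟨fun i j _ _ => (Smap_comp_Smap_eq_iff hd (by omega) _ _ _ _).2 (by ring),
    fun i k l j _ hk _ hj heq hne => ?_⟩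
  rw [Smap_comp_Smap_eq_iff hd (by omega)] at heq
  rcases add_mul_eq_add_mul_of_lt_two_mul (by omega) (by omega) heq hne with ⟨rfl, rfl⟩ | ⟨rfl, rfl⟩
  · exact ⟨i, j, by omega, Or.inl ⟨rfl, rfl⟩⟩
  · exact ⟨l, k, by omega, Or.inr ⟨rfl, rfl⟩⟩
end

section
/- For every pair of coprime positive integers (k,i) with k > i ≥ 1, the pair {k,i} occurs as a label at level n of the Euclidean tree if and only if e(k,i) = n, where e(k,i) denotes the number of subtraction steps needed to reduce the pair {k,i} to {1,1} via the simple Euclidean algorithm (repeatedly replacing the larger entry by the difference of the two entries). -/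
/-!
Going down one level of the tree adds one entry of a node to the other, which is exactly one
subtraction step of the Euclidean algorithm run backwards; so the level of a node is its number of
steps, and conversely every coprime pair is reached by running the algorithm backwards from
`{1,1}`. The root has the single child `{2,1}` rather than both `{1,2}` and `{2,1}`, so a pair is
only found in the tree up to order.
-/

def eucLevel : ℕ → Set (ℕ × ℕ)
  | 0 => {(1, 1)}
  | 1 => {(2, 1)}
  | (n + 2) => {c | ∃ q ∈ eucLevel (n + 1), c = (q.1, q.1 + q.2) ∨ c = (q.1 + q.2, q.2)}


def eSteps : ℕ → ℕ → ℕ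
  | a, b =>
    if h : 1 ≤ b ∧ b < a then eSteps (a - b) b + 1
    else if h2 : 1 ≤ a ∧ a < b then eSteps a (b - a) + 1
    else 0
termination_by a b => a + b
decreasing_by all_goals omega

lemma eSteps_of_lt {a b : ℕ} (hb : 1 ≤ b) (hba : b < a) : eSteps a b = eSteps (a - b) b + 1 := by
  rw [eSteps, dif_pos ⟨hb, hba⟩]

lemma eSteps_of_gt {a b : ℕ} (ha : 1 ≤ a) (hab : a < b) : eSteps a b = eSteps a (b - a) + 1 := by
  rw [eSteps, dif_neg (by omega), dif_pos ⟨ha, hab⟩]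

lemma eSteps_eq_zero {a b : ℕ} (h : ¬(1 ≤ b ∧ b < a)) (h' : ¬(1 ≤ a ∧ a < b)) : eSteps a b = 0 := by
  rw [eSteps, dif_neg h, dif_neg h']

lemma eSteps_comm (a b : ℕ) : eSteps a b = eSteps b a := by
  induction a, b using eSteps.induct with
  | case1 a b h ih => rw [eSteps_of_lt h.1 h.2, eSteps_of_gt h.1 h.2, ih]
  | case2 a b _ h ih => rw [eSteps_of_gt h.1 h.2, eSteps_of_lt h.1 h.2, ih]
  | case3 a b h h' => rw [eSteps_eq_zero h h', eSteps_eq_zero h' h]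

lemma eSteps_self (a : ℕ) : eSteps a a = 0 :=
  eSteps_eq_zero (by omega) (by omega)

lemma eSteps_add_left {a b : ℕ} (ha : 1 ≤ a) (hb : 1 ≤ b) : eSteps (a + b) b = eSteps a b + 1 := by
  rw [eSteps_of_lt hb (by omega), Nat.add_sub_cancel]

lemma eSteps_add_right {a b : ℕ} (ha : 1 ≤ a) (hb : 1 ≤ b) : eSteps a (a + b) = eSteps a b + 1 := by
  rw [eSteps_comm, add_comm, eSteps_add_left hb ha, eSteps_comm]

lemma one_le_of_mem_eucLevel {n : ℕ} {p : ℕ × ℕ} (hp : p ∈ eucLevel n) : 1 ≤ p.1 ∧ 1 ≤ p.2 := by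
  induction n using eucLevel.induct generalizing p with
  | case1 | case2 => simp_all [eucLevel]
  | case3 n ih =>
    obtain ⟨q, hq, rfl | rfl⟩ := hp <;> have := ih hq <;> dsimp only <;> omega

theorem eSteps_of_mem_eucLevel {n : ℕ} {p : ℕ × ℕ} (hp : p ∈ eucLevel n) : eSteps p.1 p.2 = n := by
  induction n using eucLevel.induct generalizing p with
  | case1 => simp_all [eucLevel, eSteps_self]
  | case2 => simp_all [eucLevel, eSteps_add_left le_rfl le_rfl, eSteps_self]
  | case3 n ih =>
    obtain ⟨q, hq, rfl | rfl⟩ := hp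
    · rw [eSteps_add_right (one_le_of_mem_eucLevel hq).1 (one_le_of_mem_eucLevel hq).2, ih hq]
    · rw [eSteps_add_left (one_le_of_mem_eucLevel hq).1 (one_le_of_mem_eucLevel hq).2, ih hq]

lemma add_mem_eucLevel_succ {c b m : ℕ} (h : (c, b) ∈ eucLevel m ∨ (b, c) ∈ eucLevel m) :
    (c + b, b) ∈ eucLevel (m + 1) ∨ (b, c + b) ∈ eucLevel (m + 1) := by
  cases m with
  | zero =>
    obtain ⟨rfl, rfl⟩ : c = 1 ∧ b = 1 := by simp [eucLevel] at h; omega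
    simp [eucLevel]
  | succ m =>
    rcases h with h | h
    · exact .inl ⟨_, h, .inr rfl⟩
    · exact .inr ⟨_, h, .inl (by rw [add_comm])⟩

theorem mem_eucLevel_eSteps {a b : ℕ} (ha : 1 ≤ a) (hb : 1 ≤ b) (hab : Nat.Coprime a b) :
    (a, b) ∈ eucLevel (eSteps a b) ∨ (b, a) ∈ eucLevel (eSteps a b) := by
  induction a, b using eSteps.induct with
  | case1 a b h ih =>
    have := add_mem_eucLevel_succ (ih (by omega) hb ((Nat.coprime_sub_self_left h.2.le).2 hab))
    rwa [Nat.sub_add_cancel h.2.le, ← eSteps_of_lt h.1 h.2] at this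
  | case2 a b _ h ih =>
    have := add_mem_eucLevel_succ (ih ha (by omega) ((Nat.coprime_sub_self_right h.2.le).2 hab)).symm
    rwa [Nat.sub_add_cancel h.2.le, eSteps_comm, ← eSteps_of_lt h.1 h.2, eSteps_comm, or_comm] at this
  | case3 a b h h' =>
    obtain rfl : a = b := by omega
    obtain rfl : a = 1 := (Nat.coprime_self a).1 hab
    simp [eSteps_self, eucLevel]

theorem stmt_2 (k i n : ℕ) (hi : 1 ≤ i) (hik : i < k) (hcop : Nat.gcd k i = 1) :
    ((k, i) ∈ eucLevel n ∨ (i, k) ∈ eucLevel n) ↔ eSteps k i = n := by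
  constructor
  · rintro (h | h)
    · exact eSteps_of_mem_eucLevel h
    · rw [eSteps_comm]
      exact eSteps_of_mem_eucLevel h
  · rintro rfl
    exact mem_eucLevel_eSteps (by omega) hi hcop
end

section
/- Let f : ℂ → ℂ be analytic on the disk U = {|x| < R} for some R > 1 except possibly at x = 1, and suppose H(x) := Σ_{n≥0} h(n) x^n satisfies H(x) = x/(x−1)² · T(x) on U ∖ {1}, where T is analytic on U. Then h(n) = T(1)·n − T'(1) + d(n−1) for a sequence d(n) → 0, and in particular lim_{n→∞} h(n)/n = T(1). -/
open Filter Topology NNReal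

/-!
Subtracting the principal part: `g n := h n - T 1 * n + T' 1` has generating function
`N x / (x - 1) ^ 2` with `N x = x * (T x - T 1) - T' 1 * (x - 1)`. Since `N` vanishes to second
order at `1`, this quotient (the double `dslope` of `N` at `1`) is analytic on the whole disc of
radius `R > 1`, so by Cauchy's estimates the Taylor coefficients `g n` tend to `0`.
-/

section

variable {𝕜 E : Type*} [NontriviallyNormedField 𝕜] [NormedAddCommGroup E] [NormedSpace 𝕜 E]

theorem AnalyticOnNhd.dslope {f : 𝕜 → E} {s : Set 𝕜} (hf : AnalyticOnNhd 𝕜 f s) (a : 𝕜) :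
    AnalyticOnNhd 𝕜 (dslope f a) s := by
  intro x hx
  rcases eq_or_ne x a with rfl | hxa
  · obtain ⟨p, hp⟩ := hf x hx
    exact ⟨p.fslope, hp.has_fpower_series_dslope_fslope⟩
  · have hslope : AnalyticAt 𝕜 (fun y => (y - a)⁻¹ • (f y - f a)) x :=
      ((analyticAt_id.sub analyticAt_const).inv (sub_ne_zero.2 hxa)).smul
        ((hf x hx).sub analyticAt_const)
    refine hslope.congr ?_
    filter_upwards [isOpen_ne.mem_nhds hxa] with y hy
    rw [dslope_of_ne f hy, slope_def_module]

theorem dslope_dslope_of_ne {f : 𝕜 → E} {a x : 𝕜} (hf : f a = 0) (hf' : deriv f a = 0)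
    (hx : x ≠ a) : dslope (dslope f a) a x = ((x - a) ^ 2)⁻¹ • f x := by
  rw [dslope_of_ne _ hx, slope_def_module, dslope_same, hf', dslope_of_ne _ hx,
    slope_def_module, hf, sub_zero, sub_zero, smul_smul, ← mul_inv, ← sq]

end

theorem FormalMultilinearSeries.hasFPowerSeriesOnBall_ofScalars_of_hasSum {𝕜 : Type*} [RCLike 𝕜]
    {a : ℕ → 𝕜} {F : 𝕜 → 𝕜} {r : ℝ≥0} (hr : 0 < r)
    (hF : ∀ x : 𝕜, ‖x‖ < r → HasSum (fun n => a n * x ^ n) (F x)) :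
    HasFPowerSeriesOnBall F (ofScalars 𝕜 a) 0 r where
  r_le := by
    refine ENNReal.le_of_forall_nnreal_lt fun s hs => ?_
    have hs' : ‖((s : ℝ) : 𝕜)‖ < r := by simpa using hs
    refine (ofScalars 𝕜 a).le_radius_of_tendsto (l := 0) ?_
    simpa [ofScalars_norm] using (hF _ hs').summable.tendsto_atTop_zero.norm
  r_pos := by exact_mod_cast hr
  hasSum {y} hy := by
    simpa [ofScalars_apply_eq, mul_comm] using hF y (by simpa using hy)

theorem HasFPowerSeriesAt.ofReal_le_radius_of_analyticOnNhd {E : Type*} [NormedAddCommGroup E]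
    [NormedSpace ℂ E] [CompleteSpace E] {f : ℂ → E} {p : FormalMultilinearSeries ℂ ℂ E} {c : ℂ}
    {R : ℝ} (hp : HasFPowerSeriesAt f p c) (hf : AnalyticOnNhd ℂ f (Metric.ball c R)) :
    ENNReal.ofReal R ≤ p.radius := by
  refine ENNReal.le_of_forall_nnreal_lt fun r hr => ?_
  rcases eq_zero_or_pos r with rfl | hr0
  · simp
  have hrR : (r : ℝ) < R := by simpa using (ENNReal.coe_lt_ofReal).1 hr
  have hcauchy :=
    (hf.mono (Metric.closedBall_subset_ball hrR)).differentiableOn.hasFPowerSeriesOnBall hr0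
  rw [hp.eq_formalMultilinearSeries hcauchy.hasFPowerSeriesAt]
  exact hcauchy.r_le

theorem FormalMultilinearSeries.tendsto_zero_of_one_lt_radius_ofScalars {𝕜 : Type*}
    [NontriviallyNormedField 𝕜] {a : ℕ → 𝕜} (ha : 1 < (ofScalars 𝕜 a).radius) :
    Tendsto a atTop (𝓝 0) := by
  have hsum := (ofScalars 𝕜 a).summable_norm_mul_pow (r := 1) (by exact_mod_cast ha)
  simpa [ofScalars_norm, ← tendsto_zero_iff_norm_tendsto_zero] using hsum.tendsto_atTop_zero

theorem HasSum.sub_linear_mul_pow {𝕜 : Type*} [NormedField 𝕜] [CompleteSpace 𝕜] {h : ℕ → 𝕜}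
    {x S : 𝕜} (hS : HasSum (fun n => h n * x ^ n) S) (hx : ‖x‖ < 1) (a b : 𝕜) :
    HasSum (fun n => (h n - a * n + b) * x ^ n) (S - a * (x / (1 - x) ^ 2) + b * (1 - x)⁻¹) := by
  simpa only [add_mul, sub_mul, mul_assoc] using
    (hS.sub ((hasSum_coe_mul_geometric_of_norm_lt_one hx).mul_left a)).add
      ((hasSum_geometric_of_norm_lt_one hx).mul_left b)

theorem tendsto_linear_add_div_natCast {𝕜 : Type*} [RCLike 𝕜] {g : ℕ → 𝕜} (a b : 𝕜)
    (hg : Tendsto g atTop (𝓝 0)) : Tendsto (fun n : ℕ => (a * n - b + g n) / n) atTop (𝓝 a) := by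
  have hlim := ((hg.sub_const b).mul (tendsto_inv_atTop_nhds_zero_nat (𝕜 := 𝕜))).const_add a
  rw [zero_sub, mul_zero, add_zero] at hlim
  refine hlim.congr' ?_
  filter_upwards [eventually_ne_atTop 0] with n hn
  field_simp
  ring

theorem dslope_dslope_id_mul_sub_eq {𝕜 : Type*} [NontriviallyNormedField 𝕜] {T : 𝕜 → 𝕜}
    (hT : DifferentiableAt 𝕜 T 1) {x : 𝕜} (hx : x ≠ 1) :
    dslope (dslope (fun y => y * (T y - T 1) - deriv T 1 * (y - 1)) 1) 1 x =
      x / (x - 1) ^ 2 * T x - T 1 * (x / (1 - x) ^ 2) + deriv T 1 * (1 - x)⁻¹ := by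
  have hN : HasDerivAt (fun y => y * (T y - T 1) - deriv T 1 * (y - 1))
      (1 * (T 1 - T 1) + 1 * deriv T 1 - deriv T 1 * 1) 1 :=
    ((hasDerivAt_id 1).mul (hT.hasDerivAt.sub_const (T 1))).sub
      (((hasDerivAt_id 1).sub_const 1).const_mul (deriv T 1))
  rw [dslope_dslope_of_ne (by simp) (by rw [hN.deriv]; ring) hx, smul_eq_mul]
  have := sub_ne_zero.2 hx
  have := sub_ne_zero.2 hx.symm
  field_simp
  ring

theorem stmt_6 (R : ℝ) (hR : 1 < R) (T : ℂ → ℂ)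
    (hT : AnalyticOnNhd ℂ T (Metric.ball 0 R)) (h : ℕ → ℂ)
    (hH : ∀ x : ℂ, ‖x‖ < 1 → HasSum (fun n => h n * x ^ n) (x / (x - 1) ^ 2 * T x)) :
    ∃ d : ℕ → ℂ, Tendsto d atTop (nhds 0) ∧
      (∀ n : ℕ, 1 ≤ n → h n = T 1 * n - deriv T 1 + d (n - 1)) ∧
      Tendsto (fun n : ℕ => h n / n) atTop (nhds (T 1)) := by
  set g : ℕ → ℂ := fun n => h n - T 1 * n + deriv T 1
  set N : ℂ → ℂ := fun y => y * (T y - T 1) - deriv T 1 * (y - 1)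
  have hN : AnalyticOnNhd ℂ N (Metric.ball 0 R) := fun x hx =>
    (analyticAt_id.mul ((hT x hx).sub analyticAt_const)).sub
      (analyticAt_const.mul (analyticAt_id.sub analyticAt_const))
  have hgF (x : ℂ) (hx : ‖x‖ < (1 : ℝ≥0)) :
      HasSum (fun n => g n * x ^ n) (dslope (dslope N 1) 1 x) := by
    have hx1 : x ≠ 1 := by rintro rfl; simp at hx
    rw [show dslope (dslope N 1) 1 x = _ from
      dslope_dslope_id_mul_sub_eq (hT 1 (by simpa using hR)).differentiableAt hx1]
    exact (hH x (by simpa using hx)).sub_linear_mul_pow (by simpa using hx) (T 1) (deriv T 1)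
  have hradius : 1 < (FormalMultilinearSeries.ofScalars ℂ g).radius := calc
    (1 : ENNReal) < ENNReal.ofReal R := by simpa using hR
    _ ≤ _ := (FormalMultilinearSeries.hasFPowerSeriesOnBall_ofScalars_of_hasSum one_pos hgF)
      |>.hasFPowerSeriesAt.ofReal_le_radius_of_analyticOnNhd ((hN.dslope 1).dslope 1)
  have hg := FormalMultilinearSeries.tendsto_zero_of_one_lt_radius_ofScalars hradius
  have hh : h = fun n => T 1 * n - deriv T 1 + g n := by funext n; simp [g]
  refine ⟨fun n => g (n + 1), hg.comp (tendsto_add_atTop_nat 1), fun n hn => ?_, ?_⟩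
  · dsimp only
    rw [Nat.sub_add_cancel hn, hh]
  · rw [hh]
    exact tendsto_linear_add_div_natCast _ _ hg
end

section
/- Let μ be the (m,d)-measure with probabilities {p_i}_{i=0}^{m−1}, 2 ≤ d < m ≤ 2d−1. If the limit 𝕳_μ = lim_{n→∞} h_μ(n)/(n log₂ d) exists, then (log₂ d)·𝕳_μ lies in the interval [−Σ_{i=0}^{m−1} p_i log₂ p_i − Σ_{i=0}^{m−d−1}(p_i + p_{d+i}), −Σ_{i=0}^{m−1} p_i log₂ p_i]. -/
open Real

noncomputable def Sword (m d : ℕ) {n : ℕ} (σ : Fin n → Fin m) : ℝ :=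
  (List.ofFn σ).foldr (fun j x => Smap m d (j : ℕ) x) 0

noncomputable def freq (m d n : ℕ) (z : ℝ) : ℕ :=
  Nat.card {σ : Fin n → Fin m // Sword m d σ = z}

noncomputable def fcount (m d n k : ℕ) : ℕ :=
  Nat.card {z : ℝ // (∃ σ : Fin n → Fin m, Sword m d σ = z) ∧ freq m d n z = k}


noncomputable def wt (m d : ℕ) (p : ℕ → ℝ) (n : ℕ) (z : ℝ) : ℝ :=
  ∑ᶠ σ ∈ {σ : Fin n → Fin m | Sword m d σ = z}, ∏ i, p ((σ i : ℕ))

noncomputable def hlevel (m d : ℕ) (p : ℕ → ℝ) (n : ℕ) : ℝ :=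
  -∑ᶠ z ∈ Set.range (fun σ : Fin n → Fin m => Sword m d σ),
      wt m d p n z * Real.logb 2 (wt m d p n z)

/-!
Appending a digit `j` to a word of length `n` moves its node `z` to `z + j * gap / d ^ (n + 1)`,
so the level-`(n + 1)` distribution is the image of (level-`n` distribution) ⊗ `p` under that
map. The product has entropy `h(n) + H(p)`, and taking an image never increases entropy.
Conversely, level-`n` nodes lie on the lattice `gap * ℕ / d ^ n`, so two pairs `(z, j)` collide
only if their digits differ by at least `d`. As `m ≤ 2d - 1`, each fibre then has at most two
points, both with digit in `[0, m - d) ∪ [d, m)`, and merging two masses `a`, `b` costs at most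
`a + b` bits. Hence `h(n) + H(p) - Σ (p_i + p_{d+i}) ≤ h(n + 1) ≤ h(n) + H(p)`, and `h(n) / n`
is squeezed between the two bounds of the theorem.
-/

open Finset

section Entropy

variable {α β γ : Type*} [DecidableEq β]

noncomputable def fiberSum (s : Finset α) (f : α → β) (w : α → ℝ) (b : β) : ℝ :=
  ∑ a ∈ s with f a = b, w a

noncomputable def log2Entropy (s : Finset α) (w : α → ℝ) : ℝ :=
  -∑ a ∈ s, w a * logb 2 (w a)

lemma sum_fiberSum (s : Finset α) (f : α → β) (w : α → ℝ) :
    ∑ b ∈ s.image f, fiberSum s f w b = ∑ a ∈ s, w a :=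
  sum_fiberwise_of_maps_to (fun _ ha => mem_image_of_mem f ha) w

lemma fiberSum_pos {s : Finset α} {f : α → β} {w : α → ℝ} (hw : ∀ a ∈ s, 0 < w a) {b : β}
    (hb : b ∈ s.image f) : 0 < fiberSum s f w b := by
  obtain ⟨a, ha, rfl⟩ := mem_image.mp hb
  exact sum_pos (fun a' ha' => hw a' (mem_filter.mp ha').1) ⟨a, mem_filter.mpr ⟨ha, rfl⟩⟩

lemma fiberSum_comp [DecidableEq γ] (s : Finset α) (g : α → β) (f : β → γ) (w : α → ℝ) :
    fiberSum (s.image g) f (fiberSum s g w) = fiberSum s (f ∘ g) w := by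
  funext c
  simp only [fiberSum, Function.comp_apply]
  rw [← sum_fiberwise_of_maps_to (t := {b ∈ s.image g | f b = c}) (g := g)
    (fun a ha => mem_filter.mpr ⟨mem_image_of_mem g (mem_filter.mp ha).1, (mem_filter.mp ha).2⟩)]
  refine sum_congr rfl fun b hb => sum_congr ?_ fun _ _ => rfl
  ext a
  simp only [mem_filter]
  grind

lemma fiberSum_prodMap {α' β' : Type*} [DecidableEq β'] (s : Finset α) (t : Finset α')
    (f : α → β) (g : α' → β') (v : α → ℝ) (w : α' → ℝ) (b : β) (b' : β') :
    fiberSum (s ×ˢ t) (Prod.map f g) (fun x => v x.1 * w x.2) (b, b') =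
      fiberSum s f v b * fiberSum t g w b' := by
  simp only [fiberSum, Prod.map, Prod.mk.injEq]
  rw [filter_product (fun a => f a = b) (fun a => g a = b'), sum_product, sum_mul_sum]

lemma fiberSum_univ_id [Fintype β] (w : β → ℝ) : fiberSum univ id w = w := by
  funext b
  simp [fiberSum, filter_eq']

lemma fiberSum_univ_equiv {α' : Type*} [Fintype α] [Fintype α'] (e : α' ≃ α) (f : α → β)
    (w : α → ℝ) : fiberSum univ f w = fiberSum univ (f ∘ e) (w ∘ e) := by
  funext b
  simp only [fiberSum, sum_filter, Function.comp_apply]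
  exact (e.sum_comp (fun a => if f a = b then w a else 0)).symm

lemma mul_logb_le_mul_logb_of_le {a b : ℝ} (ha : 0 ≤ a) (hab : a ≤ b) :
    a * logb 2 a ≤ a * logb 2 b := by
  rcases ha.eq_or_lt with rfl | ha
  · simp
  · exact mul_le_mul_of_nonneg_left (logb_le_logb_of_le one_lt_two ha hab) ha.le

lemma sum_mul_logb_le (s : Finset α) {w : α → ℝ} (hw : ∀ a ∈ s, 0 ≤ w a) :
    ∑ a ∈ s, w a * logb 2 (w a) ≤ (∑ a ∈ s, w a) * logb 2 (∑ a ∈ s, w a) := by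
  rw [sum_mul]
  exact sum_le_sum fun a ha => mul_logb_le_mul_logb_of_le (hw a ha) (single_le_sum hw ha)

-- Jensen for `x ↦ x log x` at the midpoint of `a` and `b`.
lemma add_mul_logb_add_le {a b : ℝ} (ha : 0 ≤ a) (hb : 0 ≤ b) :
    (a + b) * logb 2 (a + b) ≤ a * logb 2 a + b * logb 2 b + (a + b) := by
  rcases (add_nonneg ha hb).eq_or_lt with hab | hab
  · obtain ⟨rfl, rfl⟩ : a = 0 ∧ b = 0 := ⟨by linarith, by linarith⟩
    simp
  have hjensen := convexOn_mul_log.2 (Set.mem_Ici.mpr ha) (Set.mem_Ici.mpr hb)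
    (by norm_num : (0 : ℝ) ≤ 1 / 2) (by norm_num : (0 : ℝ) ≤ 1 / 2) (by norm_num)
  simp only [smul_eq_mul] at hjensen
  rw [show 1 / 2 * a + 1 / 2 * b = (a + b) / 2 by ring, log_div hab.ne' two_ne_zero] at hjensen
  have hlog2 : 0 < log 2 := log_pos one_lt_two
  calc (a + b) * logb 2 (a + b) = (a + b) * log (a + b) / log 2 := mul_div_assoc' _ _ _
    _ ≤ (a * log a + b * log b + (a + b) * log 2) / log 2 := by gcongr; linarith
    _ = a * logb 2 a + b * logb 2 b + (a + b) := by simp only [logb]; field_simp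

lemma sum_mul_logb_sum_le_of_card_le_two (t : Finset α) {w : α → ℝ} (hw : ∀ a ∈ t, 0 ≤ w a)
    (ht : #t ≤ 2) (P : α → Prop) [DecidablePred P] (hP : ∀ a ∈ t, ∀ a' ∈ t, a ≠ a' → P a) :
    (∑ a ∈ t, w a) * logb 2 (∑ a ∈ t, w a) ≤
      ∑ a ∈ t, w a * logb 2 (w a) + ∑ a ∈ t with P a, w a := by
  have hPw : 0 ≤ ∑ a ∈ t with P a, w a := sum_nonneg fun a ha => hw a (mem_filter.mp ha).1
  interval_cases h : #t
  · simp [card_eq_zero.mp h]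
  · obtain ⟨a, rfl⟩ := card_eq_one.mp h
    simpa using hPw
  · classical
    obtain ⟨a, b, hab, rfl⟩ := card_eq_two.mp h
    have hPa : P a := hP a (by simp) b (by simp) hab
    have hPb : P b := hP b (by simp) a (by simp) hab.symm
    rw [filter_true_of_mem (by simp [hPa, hPb]), sum_pair hab, sum_pair hab]
    exact add_mul_logb_add_le (hw a (by simp)) (hw b (by simp))

lemma log2Entropy_image_le (s : Finset α) (f : α → β) {w : α → ℝ} (hw : ∀ a ∈ s, 0 ≤ w a) :
    log2Entropy (s.image f) (fiberSum s f w) ≤ log2Entropy s w := by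
  rw [log2Entropy, log2Entropy, neg_le_neg_iff, ← sum_fiberwise_of_maps_to
    (fun a ha => mem_image_of_mem f ha) (fun a => w a * logb 2 (w a))]
  exact sum_le_sum fun b _ => sum_mul_logb_le _ fun a ha => hw a (mem_filter.mp ha).1

lemma log2Entropy_sub_le_image (s : Finset α) (f : α → β) {w : α → ℝ} (hw : ∀ a ∈ s, 0 ≤ w a)
    (hcard : ∀ b, #{a ∈ s | f a = b} ≤ 2) (P : α → Prop) [DecidablePred P]
    (hP : ∀ a ∈ s, ∀ a' ∈ s, f a = f a' → a ≠ a' → P a) :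
    log2Entropy s w - ∑ a ∈ s with P a, w a ≤ log2Entropy (s.image f) (fiberSum s f w) := by
  have hmaps : ∀ a ∈ s, f a ∈ s.image f := fun a ha => mem_image_of_mem f ha
  rw [log2Entropy, log2Entropy, sum_filter,
    ← sum_fiberwise_of_maps_to hmaps (fun a => w a * logb 2 (w a)),
    ← sum_fiberwise_of_maps_to hmaps (fun a => if P a then w a else 0),
    ← neg_add', neg_le_neg_iff, ← sum_add_distrib]
  refine sum_le_sum fun b _ => ?_
  rw [← sum_filter]
  refine sum_mul_logb_sum_le_of_card_le_two _ (fun a ha => hw a (mem_filter.mp ha).1) (hcard b) P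
    fun a ha a' ha' hne => ?_
  rw [mem_filter] at ha ha'
  exact hP a ha.1 a' ha'.1 (ha.2.trans ha'.2.symm) hne

lemma log2Entropy_product {α' : Type*} (s : Finset α) (t : Finset α') {v : α → ℝ}
    {w : α' → ℝ} (hv : ∀ a ∈ s, 0 < v a) (hw : ∀ b ∈ t, 0 < w b) :
    log2Entropy (s ×ˢ t) (fun x => v x.1 * w x.2) =
      (∑ b ∈ t, w b) * log2Entropy s v + (∑ a ∈ s, v a) * log2Entropy t w := by
  have hsplit : ∀ a ∈ s, ∀ b ∈ t, v a * w b * logb 2 (v a * w b) =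
      w b * (v a * logb 2 (v a)) + v a * (w b * logb 2 (w b)) := fun a ha b hb => by
    rw [logb_mul (hv a ha).ne' (hw b hb).ne']
    ring
  simp only [log2Entropy, sum_product]
  rw [sum_congr rfl fun a ha => sum_congr rfl fun b hb => hsplit a ha b hb]
  simp only [sum_add_distrib, ← sum_mul, ← mul_sum]
  ring

end Entropy

section Levels

variable {m d : ℕ}

noncomputable def gap (m d : ℕ) : ℝ := ((d : ℝ) - 1) / ((m : ℝ) - 1)

noncomputable def nodes (m d n : ℕ) : Finset ℝ :=
  univ.image fun σ : Fin n → Fin m => Sword m d σ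

noncomputable def nodeWeight (m d : ℕ) (p : ℕ → ℝ) (n : ℕ) : ℝ → ℝ :=
  fiberSum univ (fun σ : Fin n → Fin m => Sword m d σ) fun σ => ∏ i, p (σ i)

-- `appendDigit m d n (Sword m d τ, j)` is the node of the word `τ` followed by the digit `j`.
noncomputable def appendDigit (m d n : ℕ) (x : ℝ × Fin m) : ℝ :=
  x.1 + x.2 * gap m d / (d : ℝ) ^ (n + 1)

lemma foldr_Smap (l : List ℕ) (x : ℝ) :
    l.foldr (fun j y => Smap m d j y) x =
      l.foldr (fun j y => Smap m d j y) 0 + x / (d : ℝ) ^ l.length := by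
  induction l with
  | nil => simp
  | cons a l ih =>
    rw [List.foldr_cons, List.foldr_cons, ih, List.length_cons]
    simp only [Smap, pow_succ]
    ring

-- The digit list in `Sword` is coerced to `List ℕ` through the list monad.
lemma Sword_eq_foldr {n : ℕ} (σ : Fin n → Fin m) :
    Sword m d σ = (List.ofFn fun i => (σ i : ℕ)).foldr (fun j x => Smap m d j x) 0 := by
  change (List.ofFn σ |>.flatMap (pure ∘ fun a : Fin m => (a : ℕ))).foldr _ 0 = _
  rw [List.flatMap_pure_eq_map, List.map_ofFn]
  rfl

lemma Sword_snoc {n : ℕ} (τ : Fin n → Fin m) (j : Fin m) :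
    Sword m d (Fin.snoc τ j : Fin (n + 1) → Fin m) = appendDigit m d n (Sword m d τ, j) := by
  have hlist : (List.ofFn fun i => ((Fin.snoc τ j : Fin (n + 1) → Fin m) i : ℕ)) =
      (List.ofFn fun i => (τ i : ℕ)) ++ [(j : ℕ)] := by
    rw [List.ofFn_succ']
    simp [Fin.snoc_castSucc, Fin.snoc_last]
  rw [Sword_eq_foldr, hlist, List.foldr_append, foldr_Smap, ← Sword_eq_foldr, appendDigit,
    List.length_ofFn]
  simp only [List.foldr_cons, List.foldr_nil, Smap, gap]
  ring

lemma appendDigit_nat (hd : d ≠ 0) (n N : ℕ) (j : Fin m) :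
    appendDigit m d n (gap m d * N / (d : ℝ) ^ n, j) =
      gap m d * ((d * N + j : ℕ) : ℝ) / (d : ℝ) ^ (n + 1) := by
  simp only [appendDigit]
  push_cast
  field_simp
  ring

lemma exists_Sword_eq_nat (hd : d ≠ 0) {n : ℕ} (σ : Fin n → Fin m) :
    ∃ N : ℕ, Sword m d σ = gap m d * N / (d : ℝ) ^ n := by
  induction n with
  | zero => exact ⟨0, by simp [Sword]⟩
  | succ n ih =>
    obtain ⟨N, hN⟩ := ih (Fin.init σ)
    refine ⟨d * N + σ (Fin.last n), ?_⟩
    rw [← Fin.snoc_init_self σ, Sword_snoc, hN, appendDigit_nat hd, Fin.snoc_last]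

lemma appendDigit_collision (hd : 2 ≤ d) (hdm : d < m) {n : ℕ} {x y : ℝ × Fin m}
    (hx : x.1 ∈ nodes m d n) (hy : y.1 ∈ nodes m d n)
    (hxy : appendDigit m d n x = appendDigit m d n y) (hne : x ≠ y) :
    (x.2 : ℕ) + d ≤ y.2 ∨ (y.2 : ℕ) + d ≤ x.2 := by
  obtain ⟨z, j⟩ := x
  obtain ⟨z', j'⟩ := y
  show (j : ℕ) + d ≤ j' ∨ (j' : ℕ) + d ≤ j
  obtain ⟨σ, -, rfl⟩ := mem_image.mp hx
  obtain ⟨σ', -, rfl⟩ := mem_image.mp hy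
  have hd0 : d ≠ 0 := by omega
  obtain ⟨N, hN⟩ := exists_Sword_eq_nat hd0 σ
  obtain ⟨N', hN'⟩ := exists_Sword_eq_nat hd0 σ'
  have hgap : gap m d ≠ 0 := by
    have : (2 : ℝ) ≤ d := by exact_mod_cast hd
    have : (d : ℝ) < m := by exact_mod_cast hdm
    exact div_ne_zero (by linarith) (by linarith)
  have hnat : d * N + j = d * N' + j' := by
    rw [hN, hN', appendDigit_nat hd0, appendDigit_nat hd0] at hxy
    exact_mod_cast mul_left_cancel₀ hgap ((div_left_inj' (by positivity)).mp hxy)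
  rcases lt_trichotomy N N' with h | rfl | h
  · have := Nat.mul_le_mul_left d (Nat.succ_le_of_lt h)
    rw [Nat.mul_succ] at this
    omega
  · have hj : j = j' := Fin.ext (by omega)
    exact absurd (Prod.ext (hN.trans hN'.symm) hj) hne
  · have := Nat.mul_le_mul_left d (Nat.succ_le_of_lt h)
    rw [Nat.mul_succ] at this
    omega

lemma card_fiber_appendDigit_le_two (hd : 2 ≤ d) (hdm : d < m) (hm : m ≤ 2 * d) (n : ℕ)
    (y : ℝ) : #{x ∈ nodes m d n ×ˢ univ | appendDigit m d n x = y} ≤ 2 := by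
  have hinj : Set.InjOn (fun x : ℝ × Fin m => decide (d ≤ (x.2 : ℕ)))
      ↑({x ∈ nodes m d n ×ˢ univ | appendDigit m d n x = y} : Finset (ℝ × Fin m)) := by
    intro x hx x' hx' hdec
    simp only [mem_coe, mem_filter, mem_product, mem_univ, and_true] at hx hx'
    by_contra hne
    have := x.2.isLt
    have := x'.2.isLt
    rcases appendDigit_collision hd hdm hx.1 hx'.1 (hx.2.trans hx'.2.symm) hne with h | h <;>
      simp only [decide_eq_decide] at hdec <;> omega
  simpa using card_le_card_of_injOn _ (fun _ _ => mem_coe.mpr (mem_univ _)) hinj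

lemma wt_eq_nodeWeight (p : ℕ → ℝ) (n : ℕ) : wt m d p n = nodeWeight m d p n := by
  funext z
  rw [wt, nodeWeight, fiberSum, ← finsum_mem_coe_finset, coe_filter]
  simp

lemma hlevel_eq_log2Entropy (p : ℕ → ℝ) (n : ℕ) :
    hlevel m d p n = log2Entropy (nodes m d n) (nodeWeight m d p n) := by
  rw [hlevel, log2Entropy, nodes, ← wt_eq_nodeWeight, ← finsum_mem_coe_finset, coe_image,
    coe_univ, Set.image_univ]

lemma image_prodMap_Sword (n : ℕ) :
    (univ : Finset ((Fin n → Fin m) × Fin m)).image (Prod.map (fun τ => Sword m d τ) id) =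
      nodes m d n ×ˢ univ := by
  rw [← univ_product_univ, prodMap_image_product, image_id, nodes]

lemma Sword_comp_snocEquiv (n : ℕ) :
    (fun σ : Fin (n + 1) → Fin m => Sword m d σ) ∘
        ((Equiv.prodComm _ _).trans (Fin.snocEquiv fun _ => Fin m)) =
      appendDigit m d n ∘ Prod.map (fun τ => Sword m d τ) id := by
  funext x
  exact Sword_snoc x.1 x.2

lemma nodes_succ (n : ℕ) :
    nodes m d (n + 1) = (nodes m d n ×ˢ univ).image (appendDigit m d n) := by
  rw [nodes, ← image_univ_equiv ((Equiv.prodComm _ _).trans (Fin.snocEquiv fun _ => Fin m)),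
    image_image, Sword_comp_snocEquiv, ← image_image, image_prodMap_Sword]

lemma nodeWeight_succ (p : ℕ → ℝ) (n : ℕ) :
    nodeWeight m d p (n + 1) =
      fiberSum (nodes m d n ×ˢ univ) (appendDigit m d n)
        fun x => nodeWeight m d p n x.1 * p x.2 := by
  have hweight : (fun σ : Fin (n + 1) → Fin m => ∏ i, p (σ i)) ∘
      ((Equiv.prodComm _ _).trans (Fin.snocEquiv fun _ => Fin m)) =
        fun x => (∏ i, p (x.1 i)) * p x.2 := by
    funext x
    simp [Fin.prod_univ_castSucc]
  have hfiber : fiberSum univ (Prod.map (fun τ : Fin n → Fin m => Sword m d τ) id)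
      (fun x : (Fin n → Fin m) × Fin m => (∏ i, p (x.1 i)) * p x.2) =
        fun x : ℝ × Fin m => nodeWeight m d p n x.1 * p x.2 := by
    funext ⟨z, j⟩
    rw [← univ_product_univ, fiberSum_prodMap univ univ _ id
      (fun τ : Fin n → Fin m => ∏ i, p (τ i)) (fun j : Fin m => p j), fiberSum_univ_id, nodeWeight]
  rw [nodeWeight, fiberSum_univ_equiv ((Equiv.prodComm _ _).trans (Fin.snocEquiv fun _ => Fin m)),
    Sword_comp_snocEquiv, hweight, ← fiberSum_comp, hfiber, image_prodMap_Sword]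

lemma sum_range_filter_far (p : ℕ → ℝ) (hm : m ≤ 2 * d) :
    ∑ i ∈ range m with i < m - d ∨ d ≤ i, p i = ∑ i ∈ range (m - d), (p i + p (d + i)) := by
  have hsplit : {i ∈ range m | i < m - d ∨ d ≤ i} = range (m - d) ∪ Ico d m := by
    ext i
    simp only [mem_filter, mem_range, mem_union, mem_Ico]
    omega
  have hdisj : Disjoint (range (m - d)) (Ico d m) :=
    disjoint_left.2 fun i hi hi' => by simp only [mem_range, mem_Ico] at hi hi'; omega
  rw [hsplit, sum_union hdisj, sum_Ico_eq_sum_range, sum_add_distrib]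

lemma log2Entropy_univ_fin (p : ℕ → ℝ) :
    log2Entropy (univ : Finset (Fin m)) (fun j => p j) = log2Entropy (range m) p := by
  rw [log2Entropy, log2Entropy, Fin.sum_univ_eq_sum_range (fun i => p i * logb 2 (p i))]

variable {p : ℕ → ℝ}

lemma sum_nodeWeight (hp1 : ∑ i ∈ range m, p i = 1) (n : ℕ) :
    ∑ z ∈ nodes m d n, nodeWeight m d p n z = 1 := by
  rw [nodes, nodeWeight, sum_fiberSum, ← Fintype.prod_sum fun _ (j : Fin m) => p j,
    Fin.sum_univ_eq_sum_range p, hp1, prod_const_one]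

lemma nodeWeight_pos (hp : ∀ i < m, 0 < p i) {n : ℕ} {z : ℝ} (hz : z ∈ nodes m d n) :
    0 < nodeWeight m d p n z :=
  fiberSum_pos (fun σ _ => prod_pos fun i _ => hp _ (σ i).isLt) hz

lemma hlevel_zero (hp1 : ∑ i ∈ range m, p i = 1) : hlevel m d p 0 = 0 := by
  have hnodes : nodes m d 0 = {Sword m d (default : Fin 0 → Fin m)} := by
    rw [nodes, univ_unique, image_singleton]
  have hweight := sum_nodeWeight (d := d) hp1 0
  rw [hnodes, sum_singleton] at hweight
  rw [hlevel_eq_log2Entropy, hnodes, log2Entropy, sum_singleton, hweight]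
  simp

lemma hlevel_succ_eq (n : ℕ) :
    hlevel m d p (n + 1) =
      log2Entropy ((nodes m d n ×ˢ univ).image (appendDigit m d n))
        (fiberSum (nodes m d n ×ˢ univ) (appendDigit m d n)
          fun x => nodeWeight m d p n x.1 * p x.2) := by
  rw [hlevel_eq_log2Entropy, nodes_succ, nodeWeight_succ]

lemma log2Entropy_nodes_product (hp : ∀ i < m, 0 < p i) (hp1 : ∑ i ∈ range m, p i = 1)
    (n : ℕ) :
    log2Entropy (nodes m d n ×ˢ univ) (fun x : ℝ × Fin m => nodeWeight m d p n x.1 * p x.2) =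
      hlevel m d p n + log2Entropy (range m) p := by
  rw [log2Entropy_product _ _ (fun z hz => nodeWeight_pos hp hz)
      (fun (j : Fin m) _ => hp j j.isLt),
    sum_nodeWeight hp1, Fin.sum_univ_eq_sum_range p, hp1, one_mul, one_mul,
    log2Entropy_univ_fin, hlevel_eq_log2Entropy]

lemma sum_filter_far_nodeWeight (hm : m ≤ 2 * d) (hp1 : ∑ i ∈ range m, p i = 1) (n : ℕ) :
    ∑ x ∈ nodes m d n ×ˢ (univ : Finset (Fin m)) with (x.2 : ℕ) < m - d ∨ d ≤ x.2,
        nodeWeight m d p n x.1 * p x.2 =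
      ∑ i ∈ range (m - d), (p i + p (d + i)) := by
  rw [filter_product_right (fun j : Fin m => (j : ℕ) < m - d ∨ d ≤ j), sum_product]
  dsimp only
  rw [← sum_mul_sum, sum_nodeWeight hp1, one_mul, sum_filter,
    Fin.sum_univ_eq_sum_range (fun i => if i < m - d ∨ d ≤ i then p i else 0), ← sum_filter,
    sum_range_filter_far p hm]

lemma hlevel_succ_le (hp : ∀ i < m, 0 < p i) (hp1 : ∑ i ∈ range m, p i = 1) (n : ℕ) :
    hlevel m d p (n + 1) ≤ hlevel m d p n + log2Entropy (range m) p := by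
  rw [hlevel_succ_eq, ← log2Entropy_nodes_product hp hp1]
  exact log2Entropy_image_le _ _ fun (x : ℝ × Fin m) hx =>
    (mul_pos (nodeWeight_pos hp (mem_product.mp hx).1) (hp x.2 x.2.isLt)).le

lemma hlevel_add_sub_le_succ (hd : 2 ≤ d) (hdm : d < m) (hm : m ≤ 2 * d)
    (hp : ∀ i < m, 0 < p i) (hp1 : ∑ i ∈ range m, p i = 1) (n : ℕ) :
    hlevel m d p n + log2Entropy (range m) p - ∑ i ∈ range (m - d), (p i + p (d + i)) ≤
      hlevel m d p (n + 1) := by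
  rw [hlevel_succ_eq, ← log2Entropy_nodes_product hp hp1, ← sum_filter_far_nodeWeight hm hp1 n]
  refine log2Entropy_sub_le_image _ _ (fun (x : ℝ × Fin m) hx => (mul_pos (nodeWeight_pos hp
    (mem_product.mp hx).1) (hp x.2 x.2.isLt)).le) (card_fiber_appendDigit_le_two hd hdm hm n) _
    fun x hx x' hx' hxx' hne => ?_
  have := x'.2.isLt
  rcases appendDigit_collision hd hdm (mem_product.mp hx).1 (mem_product.mp hx').1 hxx' hne
    with h | h <;> omega

lemma hlevel_mem_Icc (hd : 2 ≤ d) (hdm : d < m) (hm : m ≤ 2 * d)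
    (hp : ∀ i < m, 0 < p i) (hp1 : ∑ i ∈ range m, p i = 1) (n : ℕ) :
    hlevel m d p n ∈ Set.Icc
      (n * (log2Entropy (range m) p - ∑ i ∈ range (m - d), (p i + p (d + i))))
      (n * log2Entropy (range m) p) := by
  induction n with
  | zero => simp [hlevel_zero hp1]
  | succ n ih =>
    have hle := hlevel_succ_le (d := d) hp hp1 n
    have hge := hlevel_add_sub_le_succ hd hdm hm hp hp1 n
    push_cast
    constructor <;> linarith [ih.1, ih.2]

end Levels

lemma mem_Icc_of_tendsto_div {u : ℕ → ℝ} {a b L : ℝ} (hu : ∀ n : ℕ, u n ∈ Set.Icc (n * a) (n * b))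
    (hL : Filter.Tendsto (fun n : ℕ => u n / n) Filter.atTop (nhds L)) : L ∈ Set.Icc a b := by
  refine isClosed_Icc.mem_of_tendsto hL (Filter.eventually_gt_atTop 0 |>.mono fun n hn => ?_)
  have hn : (0 : ℝ) < n := Nat.cast_pos.mpr hn
  constructor
  · rw [le_div_iff₀ hn, mul_comm]; exact (hu n).1
  · rw [div_le_iff₀ hn, mul_comm]; exact (hu n).2

theorem stmt_16 (m d : ℕ) (hd : 2 ≤ d) (hdm : d < m) (hm : m ≤ 2 * d - 1)
    (p : ℕ → ℝ) (hp : ∀ i < m, 0 < p i) (hp1 : ∑ i ∈ Finset.range m, p i = 1)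
    (E : ℝ)
    (hE : Filter.Tendsto (fun n : ℕ => hlevel m d p n / (n * Real.logb 2 d))
      Filter.atTop (nhds E)) :
    E * Real.logb 2 d ∈
      Set.Icc
        (-(∑ i ∈ Finset.range m, p i * Real.logb 2 (p i)) -
          ∑ i ∈ Finset.range (m - d), (p i + p (d + i)))
        (-(∑ i ∈ Finset.range m, p i * Real.logb 2 (p i))) := by
  have hlogd : logb 2 d ≠ 0 := (logb_pos one_lt_two (by exact_mod_cast hd)).ne'
  refine mem_Icc_of_tendsto_div (hlevel_mem_Icc hd hdm (by omega) hp hp1) ?_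
  refine (hE.mul_const (logb 2 d)).congr fun n => ?_
  rw [div_mul_eq_mul_div, mul_div_mul_right _ _ hlogd]
end

section
/- For 2 ≤ d < m ≤ 2d−1, the number of distinct nodes at level n of the (m,d)-graph, i.e. the cardinality of the set {S_σ(0) : σ ∈ {0,...,m−1}^n}, equals d^n + (m−d)(d^n − 1)/(d−1). -/
open Real

/-- Integer value of a digit word (Horner). -/
def Nval (m d : ℕ) : {n : ℕ} → (Fin n → Fin m) → ℕ
  | 0, _ => 0
  | n + 1, σ => (σ 0 : ℕ) * d ^ n + Nval m d (Fin.tail σ)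

lemma Sword_succ (m d : ℕ) {n : ℕ} (σ : Fin (n + 1) → Fin m) :
    Sword m d σ = Smap m d (σ 0 : ℕ) (Sword m d (Fin.tail σ)) := by
  simp only [Sword, List.ofFn_succ, List.foldr_cons]
  rfl

lemma Sword_eq (m d : ℕ) (hd : 0 < d) (hm : 1 < m) {n : ℕ} (σ : Fin n → Fin m) :
    Sword m d σ = ((d : ℝ) - 1) / ((m : ℝ) - 1) * (Nval m d σ) / (d : ℝ) ^ n := by
  induction n with
  | zero => simp [Sword, Nval]
  | succ n ih =>
    rw [Sword_succ, ih (Fin.tail σ), Smap, Nval]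
    have hd0 : (d : ℝ) ≠ 0 := by positivity
    have hdn : (d : ℝ) ^ n ≠ 0 := by positivity
    have hm0 : (m : ℝ) - 1 ≠ 0 := by
      have : (1:ℝ) < m := by exact_mod_cast hm
      linarith
    push_cast
    field_simp
    ring

lemma geo (d : ℕ) (hd : 1 ≤ d) (n : ℕ) :
    (d - 1) * ∑ k ∈ Finset.range n, d ^ k = d ^ n - 1 := by
  induction n with
  | zero => simp
  | succ n ih =>
    rw [Finset.sum_range_succ, Nat.mul_add, ih, pow_succ]
    have h1 : 1 ≤ d ^ n := Nat.one_le_pow _ _ (by omega)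
    have h2 : (d - 1) * d ^ n = d * d ^ n - d ^ n := Nat.sub_one_mul d (d ^ n)
    have h3 : d ^ n ≤ d * d ^ n := Nat.le_mul_of_pos_left _ (by omega)
    have h4 : d ^ n * d = d * d ^ n := mul_comm _ _
    omega

lemma Nval_le (m d : ℕ) {n : ℕ} (σ : Fin n → Fin m) :
    Nval m d σ ≤ (m - 1) * ∑ k ∈ Finset.range n, d ^ k := by
  induction n with
  | zero => simp [Nval]
  | succ n ih =>
    rw [Nval, Finset.sum_range_succ, Nat.mul_add]
    have h1 : (σ 0 : ℕ) ≤ m - 1 := by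
      have := (σ 0).isLt; omega
    have := ih (Fin.tail σ)
    have h2 : (σ 0 : ℕ) * d ^ n ≤ (m - 1) * d ^ n :=
      Nat.mul_le_mul_right _ h1
    omega

lemma Nval_surj (m d : ℕ) (hd : 2 ≤ d) (hdm : d < m) {n : ℕ} (t : ℕ)
    (ht : t ≤ (m - 1) * ∑ k ∈ Finset.range n, d ^ k) :
    ∃ σ : Fin n → Fin m, Nval m d σ = t := by
  induction n generalizing t with
  | zero =>
    simp at ht
    exact ⟨Fin.elim0, by simp [Nval, ht]⟩
  | succ n ih =>
    rw [Finset.sum_range_succ, Nat.mul_add] at ht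
    set G := ∑ k ∈ Finset.range n, d ^ k with hG
    set a := min (m - 1) (t / d ^ n) with ha
    have hdn : 0 < d ^ n := Nat.pow_pos (by omega)
    have ham : a < m := by
      have : a ≤ m - 1 := min_le_left _ _
      omega
    have hale : a * d ^ n ≤ t := by
      calc a * d ^ n ≤ (t / d ^ n) * d ^ n :=
            Nat.mul_le_mul_right _ (min_le_right _ _)
        _ ≤ t := Nat.div_mul_le_self _ _
    have hrem : t - a * d ^ n ≤ (m - 1) * G := by
      rcases le_or_gt (m - 1) (t / d ^ n) with h | h
      · have haeq : a = m - 1 := min_eq_left h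
        have h3 : (m - 1) * d ^ n ≤ t :=
          le_trans (Nat.mul_le_mul_right _ h) (Nat.div_mul_le_self _ _)
        have h4 : a * d ^ n = (m - 1) * d ^ n := by rw [haeq]
        omega
      · have haeq : a = t / d ^ n := min_eq_right h.le
        have hdm2 := Nat.div_add_mod t (d ^ n)
        have hmlt : t % d ^ n < d ^ n := Nat.mod_lt _ hdn
        have hdG : d ^ n ≤ d * G + 1 := by
          have hgeo := geo d (by omega) n
          rw [← hG] at hgeo
          have : (d - 1) * G ≤ d * G := Nat.mul_le_mul_right _ (by omega)
          omega
        have hmG : d * G ≤ (m - 1) * G := Nat.mul_le_mul_right _ (by omega)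
        have haeq2 : a * d ^ n = d ^ n * (t / d ^ n) := by rw [haeq]; ring
        omega
    obtain ⟨τ, hτ⟩ := ih (t - a * d ^ n) hrem
    refine ⟨Fin.cons ⟨a, ham⟩ τ, ?_⟩
    rw [Nval]
    simp only [Fin.cons_zero, Fin.tail_cons, hτ]
    omega

theorem stmt_18 (m d : ℕ) (hd : 2 ≤ d) (hdm : d < m) (hm : m ≤ 2 * d - 1) (n : ℕ) :
    (Set.range (fun σ : Fin n → Fin m => Sword m d σ)).ncard =
      (m - 1) * (d ^ n - 1) / (d - 1) + 1 := by
  set r : ℝ := ((d : ℝ) - 1) / ((m : ℝ) - 1) with hr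
  set f : ℕ → ℝ := fun t => r * t / (d : ℝ) ^ n with hf
  have hd0 : (0:ℝ) < d := by positivity
  have hrpos : 0 < r := by
    apply div_pos
    · have : (2:ℝ) ≤ d := by exact_mod_cast hd
      linarith
    · have h1 : (2:ℝ) ≤ d := by exact_mod_cast hd
      have h2 : (d:ℝ) < m := by exact_mod_cast hdm
      linarith
  have hfinj : Function.Injective f := by
    intro a b hab
    have hdn : (0:ℝ) < (d:ℝ) ^ n := by positivity
    have h : r * a = r * b := by
      simp only [hf] at hab
      exact (div_left_inj' (ne_of_gt hdn)).mp hab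
    have : (a:ℝ) = b := by
      have := mul_left_cancel₀ (ne_of_gt hrpos) h
      exact this
    exact_mod_cast this
  set G := ∑ k ∈ Finset.range n, d ^ k with hG
  have hrange : Set.range (fun σ : Fin n → Fin m => Sword m d σ)
      = f '' (Set.Icc 0 ((m - 1) * G)) := by
    ext z
    simp only [Set.mem_range, Set.mem_image, Set.mem_Icc]
    constructor
    · rintro ⟨σ, rfl⟩
      exact ⟨Nval m d σ, ⟨Nat.zero_le _, Nval_le m d σ⟩,
        (Sword_eq m d (by omega) (by omega) σ).symm⟩
    · rintro ⟨t, ⟨-, ht⟩, rfl⟩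
      obtain ⟨σ, hσ⟩ := Nval_surj m d hd hdm t ht
      exact ⟨σ, by rw [Sword_eq m d (by omega) (by omega) σ, hσ]⟩
  rw [hrange, Set.ncard_image_of_injective _ hfinj]
  have hIcc : (Set.Icc 0 ((m - 1) * G)).ncard = (m - 1) * G + 1 := by
    rw [← Finset.coe_Icc, Set.ncard_coe_finset, Nat.card_Icc]
    omega
  rw [hIcc]
  congr 1
  symm
  apply Nat.div_eq_of_eq_mul_left (by omega)
  rw [mul_comm ((m-1) * G) (d-1), ← mul_assoc, mul_comm (d-1) (m-1), mul_assoc,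
    geo d (by omega) n]
end
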